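/- arXiv:2102.08030 — 5 statements merged into one kernel-verified Lean document; each statement's English description precedes it below -/
import Mathlib

section
/- For the numbers game action σ_r(i)_t = i_t - a_{tr} i_r on I^n, if a_{rs} = -3 and a_{sr} = -1 (triple edge with arrow from r to s, type G₂), then (σ_r σ_s)³ = (σ_s σ_r)³ as maps I^n → I^n. -/
/-- For the numbers game action on `(ℤ/eℤ)^n`, if `a_{rs} = -3` and `a_{sr} = -1`
(triple edge with arrow from `r` to `s`, type G₂), then `(σ_r σ_s)³ = (σ_s σ_r)³`. -/
theorem stmt_8 (e n : ℕ) (a : Fin n → Fin n → ℤ) (r s : Fin n) (hrs : r ≠ s)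
    (harr : a r r = 2) (hass : a s s = 2) (hars : a r s = -3) (hasr : a s r = -1)
    (σr σs : (Fin n → ZMod e) → (Fin n → ZMod e))
    (hσr : ∀ i t, σr i t = i t - (a t r : ZMod e) * i r)
    (hσs : ∀ i t, σs i t = i t - (a t s : ZMod e) * i s) :
    (σr ∘ σs) ∘ (σr ∘ σs) ∘ (σr ∘ σs) = (σs ∘ σr) ∘ (σs ∘ σr) ∘ (σs ∘ σr) := by
  funext i t
  simp only [Function.comp_apply, hσr, hσs, harr, hass, hars, hasr]
  push_cast
  ring
end

section
/- The intertwining element Φ_r = T_r + (1-q)(1-X_r)^{-1} in the rationalized non-degenerate affine Hecke algebra satisfies Φ_r f = σ_r(f) Φ_r for every f ∈ k(X), and Φ_r² = (1 - qX_r)(q - X_r)/(1 - X_r)². -/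
/-- In the rationalized non-degenerate affine Hecke algebra (with `(T_r+1)(T_r-q) = 0`,
`T_r f = σ_r(f) T_r + (1-q) D_r(f)` where `D_r(f) = (σ_r(f)-f)/(1-X_r)`,
`σ_r(X_r) = X_r⁻¹`, `σ_r² = id`, `σ_r(q) = q`), the intertwining element
`Φ_r = T_r + (1-q)(1-X_r)⁻¹` satisfies `Φ_r f = σ_r(f) Φ_r` for every `f`,
and `Φ_r² = (1 - qX_r)(q - X_r)/(1 - X_r)²`. -/
theorem stmt_12 (K : Type*) [Field K] (A : Type*) [Ring A]
    (ι : K →+* A) (σ : K →+* K) (q X : K)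
    (hq0 : q ≠ 0) (hq1 : q ≠ 1) (hX0 : X ≠ 0) (hX1 : X ≠ 1)
    (hσσ : ∀ f, σ (σ f) = f) (hσX : σ X = X⁻¹) (hσq : σ q = q)
    (T : A) (hquad : (T + 1) * (T - ι q) = 0)
    (hT : ∀ f : K, T * ι f = ι (σ f) * T + ι ((1 - q) * ((σ f - f) / (1 - X)))) :
    (∀ f : K, (T + ι ((1 - q) / (1 - X))) * ι f
        = ι (σ f) * (T + ι ((1 - q) / (1 - X)))) ∧
    (T + ι ((1 - q) / (1 - X))) * (T + ι ((1 - q) / (1 - X)))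
        = ι ((1 - q * X) * (q - X) / (1 - X) ^ 2) := by
  have hX1' : (1 : K) - X ≠ 0 := sub_ne_zero.mpr (Ne.symm hX1)
  have hX1'' : X - (1 : K) ≠ 0 := sub_ne_zero.mpr hX1
  set c : K := (1 - q) / (1 - X) with hc
  have h1 : ∀ f : K, (T + ι c) * ι f = ι (σ f) * (T + ι c) := by
    intro f
    have key : (1 - q) * ((σ f - f) / (1 - X)) + c * f = σ f * c := by
      rw [hc]; field_simp; ring
    calc (T + ι c) * ι f = T * ι f + ι (c * f) := by rw [add_mul, map_mul]
      _ = ι (σ f) * T + ι ((1 - q) * ((σ f - f) / (1 - X)) + c * f) := by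
          rw [map_add, hT f, add_assoc]
      _ = ι (σ f) * T + ι (σ f * c) := by rw [key]
      _ = ι (σ f) * (T + ι c) := by rw [mul_add, map_mul]
  refine ⟨h1, ?_⟩
  have hσc : σ c = (1 - q) * X / (X - 1) := by
    rw [hc]
    simp only [map_div₀, map_sub, map_one, hσq, hσX]
    rw [div_eq_div_iff (by field_simp; exact div_ne_zero hX1'' hX0) hX1'']
    field_simp
  have hTq : T * ι q = ι q * T := by
    rw [hT q, hσq]
    simp
  have hT2 : T * T = ι (q - 1) * T + ι q := by
    have h : T * T + T - T * ι q - ι q = 0 := by rw [← hquad]; noncomm_ring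
    rw [hTq] at h
    have h2 : T * T - (ι (q - 1) * T + ι q) = T * T + T - ι q * T - ι q := by
      rw [map_sub, map_one]; noncomm_ring
    exact sub_eq_zero.mp (h2.trans h)
  have hcoef : (q - 1) + σ c + c = 0 := by
    rw [hσc, hc]; field_simp; ring
  have hconst : q + (1 - q) * ((σ c - c) / (1 - X)) + c * c
      = (1 - q * X) * (q - X) / (1 - X) ^ 2 := by
    rw [hσc, hc]; field_simp; ring
  calc (T + ι c) * (T + ι c)
      = T * T + T * ι c + ι c * T + ι (c * c) := by rw [map_mul]; noncomm_ring
    _ = (ι (q - 1) * T + ι q) + (ι (σ c) * T + ι ((1 - q) * ((σ c - c) / (1 - X))))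
        + ι c * T + ι (c * c) := by rw [hT2, hT c]
    _ = ι ((q - 1) + σ c + c) * T
        + ι (q + (1 - q) * ((σ c - c) / (1 - X)) + c * c) := by
          rw [map_add, map_add, map_add, map_add, add_mul, add_mul]; abel
    _ = ι ((1 - q * X) * (q - X) / (1 - X) ^ 2) := by
          rw [hcoef, hconst, map_zero, zero_mul, zero_add]
end

section
/- In the cyclotomic degenerate affine Hecke algebra H(Λ), for each r and each i with i_r = 0, the generator t_r commutes with the idempotent e(i): t_r e(i) = e(i) t_r. -/
/-!
Let `E = e(i)` and let `I` be the ideal of polynomials vanishing at the point `(i_s)_s`.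
Since `i_r = 0`, `I` is stable under the reflection `σ = σ_r`, so the twisted derivation
`D = ∂_r` maps `I^(m+1)` into `I^m`. The polynomials `f` with `f(x) E = 0` form an ideal
which contains a power `I^N`. Feeding `f = (X_s - i_s)^(N+1)` and `σ f` into
`t f(x) = (σ f)(x) t + (D f)(x)` shows that `t E` and `E t` are killed by a power of every
`x_s - i_s` from the left and from the right respectively, whence `E t E = t E` and
`E t E = E t`.
-/

open MvPolynomial

section TwistedDerivation

variable {R : Type*} [CommRing R] {F : Type*} [FunLike F R R] [RingHomClass F R R]
  {σ : F} {D : R → R} {z : R}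

theorem map_add_of_mul_eq_sub (hz : IsLeftRegular z) (hD : ∀ f, z * D f = σ f - f)
    (f g : R) : D (f + g) = D f + D g :=
  hz <| show z * D (f + g) = z * (D f + D g) by rw [mul_add, hD, hD, hD, map_add]; ring

theorem map_mul_of_mul_eq_sub (hz : IsLeftRegular z) (hD : ∀ f, z * D f = σ f - f)
    (f g : R) : D (f * g) = σ f * D g + D f * g :=
  hz <| show z * D (f * g) = z * (σ f * D g + D f * g) by
    rw [mul_add, mul_left_comm, ← mul_assoc z, hD, hD, hD, map_mul]; ring

end TwistedDerivation

theorem map_mem_pow_of_mem_pow_succ {R : Type*} [CommRing R] {σ D : R → R}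
    (hadd : ∀ f g, D (f + g) = D f + D g)
    (hmul : ∀ f g, D (f * g) = σ f * D g + D f * g) {I : Ideal R} (hI : ∀ f ∈ I, σ f ∈ I)
    (m : ℕ) : ∀ f ∈ I ^ (m + 1), D f ∈ I ^ m := by
  induction m with
  | zero => simp
  | succ m ih =>
    intro f hf
    rw [pow_succ'] at hf
    refine Submodule.mul_induction_on hf (fun a ha b hb => ?_) fun f g hf hg => ?_
    · rw [hmul]
      refine add_mem ?_ (Ideal.mul_mem_left _ _ hb)
      rw [pow_succ']
      exact Ideal.mul_mem_mul (hI a ha) (ih b hb)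
    · rw [hadd]; exact add_mem hf hg

theorem Ideal.exists_span_pow_le {R ι : Type*} [CommRing R] [Finite ι] {g : ι → R}
    {J : Ideal R} (hg : ∀ s, ∃ m : ℕ, g s ^ m ∈ J) :
    ∃ N : ℕ, Ideal.span (Set.range g) ^ N ≤ J :=
  Ideal.exists_pow_le_of_le_radical_of_fg
    (Ideal.span_le.mpr <| Set.range_subset_iff.mpr hg)
    (Submodule.fg_span (Set.finite_range g))

section Annihilator

variable {A H : Type*} [CommRing A] [Ring H] {F : Type*} [FunLike F A H] [RingHomClass F A H]

def annIdeal (π : F) (E : H) : Ideal A where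
  carrier := {f | π f * E = 0}
  add_mem' {f g} hf hg := by simp_all [add_mul]
  zero_mem' := by simp
  smul_mem' c f hf := by simp_all [mul_assoc]

variable {π : F} {E : H}

@[simp]
theorem mem_annIdeal {f : A} : f ∈ annIdeal π E ↔ π f * E = 0 := Iff.rfl

variable {t : H} {σ D : A → A}

theorem map_mul_mul_eq_zero (ht : ∀ f, t * π f = π (σ f) * t + π (D f))
    (hσ : Function.Involutive σ) {f : A} (h₁ : σ f ∈ annIdeal π E)
    (h₂ : D (σ f) ∈ annIdeal π E) : π f * (t * E) = 0 := by
  have := ht (σ f)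
  rw [hσ f, ← sub_eq_iff_eq_add] at this
  rw [mem_annIdeal] at h₁ h₂
  rw [← mul_assoc, ← this, sub_mul, mul_assoc, h₁, h₂, mul_zero, sub_zero]

theorem mul_mul_map_eq_zero (ht : ∀ f, t * π f = π (σ f) * t + π (D f))
    (hE : ∀ f, Commute E (π f)) {f : A} (h₁ : σ f ∈ annIdeal π E)
    (h₂ : D f ∈ annIdeal π E) : E * t * π f = 0 := by
  rw [mem_annIdeal] at h₁ h₂
  rw [mul_assoc, ht, mul_add, ← mul_assoc, (hE _).eq, h₁, zero_mul, (hE _).eq, h₂, add_zero]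

end Annihilator

namespace MvPolynomial

theorem commute_of_commute_X {ι k H : Type*} [CommSemiring k] [Semiring H] [Algebra k H]
    (π : MvPolynomial ι k →ₐ[k] H) {E : H} (hE : ∀ s, Commute E (π (X s)))
    (f : MvPolynomial ι k) : Commute E (π f) := by
  induction f using MvPolynomial.induction_on with
  | C c => rw [← algebraMap_eq, π.commutes]; exact (Algebra.commutes c E).symm
  | add f g hf hg => rw [map_add]; exact hf.add_right hg
  | mul_X f s hf => rw [map_mul]; exact hf.mul_right (hE s)

variable {ι k : Type*} [CommRing k] {a : ι → ℤ} {r : ι}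
  {σ : MvPolynomial ι k →ₐ[k] MvPolynomial ι k}

theorem involutive_of_map_X (har : a r = 2) (hσ : ∀ s, σ (X s) = X s - a s • X r) :
    Function.Involutive σ := by
  have hσr : σ (X r) = -X r := by rw [hσ r, har, two_zsmul]; abel
  suffices σ.comp σ = AlgHom.id k _ from fun f => congrArg (· f) this
  refine algHom_ext fun s => ?_
  rw [AlgHom.comp_apply, hσ, map_sub, map_zsmul, hσ, hσr, AlgHom.id_apply, smul_neg,
    sub_neg_eq_add, sub_add_cancel]

theorem map_mem_span_X_sub_C {c : ι → k} (hc : c r = 0)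
    (hσ : ∀ s, σ (X s) = X s - a s • X r) {f : MvPolynomial ι k}
    (hf : f ∈ Ideal.span (Set.range fun s => X s - C (c s))) :
    σ f ∈ Ideal.span (Set.range fun s => X s - C (c s)) := by
  set I := Ideal.span (Set.range fun s => X s - C (c s))
  suffices I ≤ I.comap σ from this hf
  refine Ideal.span_le.mpr (Set.range_subset_iff.mpr fun s => ?_)
  have hσs : σ (X s - C (c s)) = (X s - C (c s)) - a s • (X r - C (c r)) := by
    rw [map_sub, hσ, ← algebraMap_eq, σ.commutes, hc, map_zero, sub_zero, algebraMap_eq]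
    abel
  rw [SetLike.mem_coe, Ideal.mem_comap, hσs]
  exact sub_mem (Ideal.subset_span (Set.mem_range_self s))
    (zsmul_mem (Ideal.subset_span (Set.mem_range_self r)) _)

end MvPolynomial

theorem stmt_16_general (k : Type*) [Field k] (n eN : ℕ)
    (ch : ZMod eN →+* k) (a : Fin n → Fin n → ℤ)
    (H : Type*) [Ring H] [Algebra k H]
    (x : Fin n → H) (t : H) (r : Fin n) (harr : a r r = 2)
    (σ : MvPolynomial (Fin n) k →ₐ[k] MvPolynomial (Fin n) k)
    (hσ : ∀ s, σ (MvPolynomial.X s) =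
      MvPolynomial.X s - (a s r) • MvPolynomial.X r)
    (D : MvPolynomial (Fin n) k → MvPolynomial (Fin n) k)
    (hD : ∀ f, MvPolynomial.X r * D f = σ f - f)
    (π : MvPolynomial (Fin n) k →ₐ[k] H)
    (hπ : ∀ s, π (MvPolynomial.X s) = x s)
    (ht : ∀ f, t * π f = π (σ f) * t + π (D f))
    (e : (Fin n → ZMod eN) → H)
    (hidem : ∀ v, e v * e v = e v)
    (hxe : ∀ v s, x s * e v = e v * x s)
    (hmemL : ∀ (v : Fin n → ZMod eN) (h : H),
      e v * h = h ↔ ∀ s, ∃ m : ℕ, (x s - algebraMap k H (ch (v s))) ^ m * h = 0)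
    (hmemR : ∀ (v : Fin n → ZMod eN) (h : H),
      h * e v = h ↔ ∀ s, ∃ m : ℕ, h * (x s - algebraMap k H (ch (v s))) ^ m = 0)
    (i : Fin n → ZMod eN) (hi : i r = 0) :
    t * e i = e i * t := by
  set c : Fin n → k := fun s => ch (i s)
  set I : Ideal (MvPolynomial (Fin n) k) := Ideal.span (Set.range fun s => X s - C (c s))
  have hπX (s : Fin n) (m : ℕ) :
      π ((X s - C (c s)) ^ m) = (x s - algebraMap k H (c s)) ^ m := by
    rw [map_pow, map_sub, hπ, ← algebraMap_eq, π.commutes]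
  obtain ⟨N, hN⟩ : ∃ N, I ^ N ≤ annIdeal π (e i) :=
    Ideal.exists_span_pow_le fun s => ((hmemL i (e i)).mp (hidem i) s).imp fun m hm => by
      rwa [mem_annIdeal, hπX]
  have hσI : ∀ f ∈ I, σ f ∈ I := fun _ => map_mem_span_X_sub_C (by simp [c, hi]) hσ
  have hz : IsLeftRegular (X r : MvPolynomial (Fin n) k) :=
    (IsRegular.of_ne_zero (X_ne_zero r)).left
  have hDI := map_mem_pow_of_mem_pow_succ (map_add_of_mul_eq_sub hz hD)
    (map_mul_of_mul_eq_sub hz hD) hσI N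
  have hPI (s : Fin n) : (X s - C (c s)) ^ (N + 1) ∈ I ^ (N + 1) :=
    Ideal.pow_mem_pow (Ideal.subset_span (Set.mem_range_self s)) _
  have hσPI (s : Fin n) : σ ((X s - C (c s)) ^ (N + 1)) ∈ I ^ (N + 1) :=
    map_pow σ _ _ ▸ Ideal.pow_mem_pow (hσI _ (Ideal.subset_span (Set.mem_range_self s))) _
  have hle : I ^ (N + 1) ≤ annIdeal π (e i) := (Ideal.pow_le_pow_right N.le_succ).trans hN
  have hσσ := involutive_of_map_X (a := (a · r)) harr hσ
  have hE : ∀ f, Commute (e i) (π f) :=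
    commute_of_commute_X π fun s => hπ s ▸ (hxe i s).symm
  have hL : e i * (t * e i) = t * e i := (hmemL i _).mpr fun s => ⟨N + 1, by
    rw [← hπX]; exact map_mul_mul_eq_zero ht hσσ (hle (hσPI s)) (hN (hDI _ (hσPI s)))⟩
  have hR : e i * t * e i = e i * t := (hmemR i _).mpr fun s => ⟨N + 1, by
    rw [← hπX]; exact mul_mul_map_eq_zero ht hE (hle (hσPI s)) (hN (hDI _ (hPI s)))⟩
  rw [← hL, ← mul_assoc, hR]

/-- In the cyclotomic degenerate affine Hecke algebra `H(Λ)` (axiomatized by: commuting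
elements `x_s`, the relation `t_r f = σ_r(f) t_r + ∂_r(f)` for polynomials `f` in the
`x_s`, and a family of orthogonal generalized-eigenspace idempotents `e(i)`, `i ∈ I^n`,
summing to `1`, characterized by `e(i)h = h ↔ (x_s - i_s)^m h = 0` for all `s` and
`m ≫ 0`, and likewise on the right), for each `r` and each `i` with `i_r = 0`
the generator `t_r` commutes with the idempotent `e(i)`. -/
theorem stmt_16 (k : Type*) [Field k] (n eN : ℕ) [NeZero eN]
    (ch : ZMod eN →+* k) (a : Fin n → Fin n → ℤ)
    (H : Type*) [Ring H] [Algebra k H]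
    (x : Fin n → H) (t : H) (r : Fin n) (harr : a r r = 2)
    (σ : MvPolynomial (Fin n) k →ₐ[k] MvPolynomial (Fin n) k)
    (hσ : ∀ s, σ (MvPolynomial.X s) =
      MvPolynomial.X s - (a s r) • MvPolynomial.X r)
    (D : MvPolynomial (Fin n) k → MvPolynomial (Fin n) k)
    (hD : ∀ f, MvPolynomial.X r * D f = σ f - f)
    (π : MvPolynomial (Fin n) k →ₐ[k] H)
    (hπ : ∀ s, π (MvPolynomial.X s) = x s)
    (ht : ∀ f, t * π f = π (σ f) * t + π (D f))
    (e : (Fin n → ZMod eN) → H)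
    (hidem : ∀ v, e v * e v = e v)
    (horth : ∀ v w, v ≠ w → e v * e w = 0)
    (hsum : ∑ v, e v = 1)
    (hxe : ∀ v s, x s * e v = e v * x s)
    (hmemL : ∀ (v : Fin n → ZMod eN) (h : H),
      e v * h = h ↔ ∀ s, ∃ m : ℕ, (x s - algebraMap k H (ch (v s))) ^ m * h = 0)
    (hmemR : ∀ (v : Fin n → ZMod eN) (h : H),
      h * e v = h ↔ ∀ s, ∃ m : ℕ, h * (x s - algebraMap k H (ch (v s))) ^ m = 0)
    (i : Fin n → ZMod eN) (hi : i r = 0) :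
    t * e i = e i * t :=
  stmt_16_general k n eN ch a H x t r harr σ hσ D hD π hπ ht e hidem hxe hmemL hmemR i hi
end

section
/- In the cyclotomic degenerate affine Hecke algebra H(Λ), for each r and each i with i_r ≠ 0, one has t_r e(i) = e(σ_r(i)) t_r + x_r^{-1} e(σ_r(i)) - x_r^{-1} e(i), where x_r^{-1}e(j) denotes the inverse of x_r e(j) in the corner algebra (which exists since j_r ≠ 0). -/
private lemma aux_nilp {H : Type*} [Ring H] (A B p b : H)
    (cAB : Commute A B) (cAp : Commute A p) (cBp : Commute B p)
    (cbA : Commute b A) (cbB : Commute b B) (cbp : Commute b p)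
    (hp : p * p = p)
    (h1 : ∃ m, A ^ m * p = 0) (h2 : ∃ m, B ^ m * p = 0) :
    ∃ m, (A - b * B) ^ m * p = 0 ∧ p * (A - b * B) ^ m = 0 := by
  obtain ⟨m1, h1⟩ := h1
  obtain ⟨m2, h2⟩ := h2
  have hpid : IsIdempotentElem p := hp
  have nA : IsNilpotent (A * p) := by
    refine ⟨m1 + 1, ?_⟩
    rw [cAp.mul_pow, hpid.pow_succ_eq, pow_succ', mul_assoc, h1, mul_zero]
  have nB : IsNilpotent (B * p) := by
    refine ⟨m2 + 1, ?_⟩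
    rw [cBp.mul_pow, hpid.pow_succ_eq, pow_succ', mul_assoc, h2, mul_zero]
  have cbBp : Commute b (B * p) := cbB.mul_right cbp
  have nbB : IsNilpotent (b * (B * p)) := by
    obtain ⟨m, hm⟩ := nB
    exact ⟨m, by rw [cbBp.mul_pow, hm, mul_zero]⟩
  have cApb : Commute (A * p) b := Commute.mul_left cbA.symm cbp.symm
  have cApB : Commute (A * p) B := Commute.mul_left cAB cBp.symm
  have cApp : Commute (A * p) p := Commute.mul_left cAp (Commute.refl p)
  have cmain : Commute (A * p) (b * (B * p)) :=
    Commute.mul_right cApb (Commute.mul_right cApB cApp)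
  have nC : IsNilpotent (A * p - b * (B * p)) := cmain.isNilpotent_sub nA nbB
  obtain ⟨m, hm⟩ := nC
  have hCp : (A - b * B) * p = A * p - b * (B * p) := by
    rw [sub_mul, mul_assoc]
  have cCp : Commute (A - b * B) p :=
    Commute.sub_left cAp (Commute.mul_left cbp cBp)
  have key : (A - b * B) ^ (m + 1) * p = 0 := by
    have : ((A - b * B) * p) ^ (m + 1) = 0 := by
      rw [pow_succ, hCp, hm, zero_mul]
    rwa [cCp.mul_pow, hpid.pow_succ_eq] at this
  exact ⟨m + 1, key, by rw [← (cCp.pow_left (m + 1)).eq, key]⟩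

/-- In the cyclotomic degenerate affine Hecke algebra `H(Λ)` (axiomatized as in the
previous statement), for each `r` and each `i` with `i_r ≠ 0` one has
`t_r e(i) = e(σ_r(i)) t_r + x_r⁻¹ e(σ_r(i)) - x_r⁻¹ e(i)`, where `x_r⁻¹ e(j)` denotes
the inverse of `x_r e(j)` in the corner algebra `e(j) H(Λ) e(j)` (which exists since
`j_r ≠ 0`). -/
theorem stmt_17 (k : Type*) [Field k] (n eN : ℕ) [NeZero eN]
    (ch : ZMod eN →+* k) (a : Fin n → Fin n → ℤ)
    (H : Type*) [Ring H] [Algebra k H]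
    (x : Fin n → H) (t : H) (r : Fin n) (harr : a r r = 2)
    (σ : MvPolynomial (Fin n) k →ₐ[k] MvPolynomial (Fin n) k)
    (hσ : ∀ s, σ (MvPolynomial.X s) =
      MvPolynomial.X s - (a s r) • MvPolynomial.X r)
    (D : MvPolynomial (Fin n) k → MvPolynomial (Fin n) k)
    (hD : ∀ f, MvPolynomial.X r * D f = σ f - f)
    (π : MvPolynomial (Fin n) k →ₐ[k] H)
    (hπ : ∀ s, π (MvPolynomial.X s) = x s)
    (ht : ∀ f, t * π f = π (σ f) * t + π (D f))
    (e : (Fin n → ZMod eN) → H)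
    (hidem : ∀ v, e v * e v = e v)
    (horth : ∀ v w, v ≠ w → e v * e w = 0)
    (hsum : ∑ v, e v = 1)
    (hxe : ∀ v s, x s * e v = e v * x s)
    (hmemL : ∀ (v : Fin n → ZMod eN) (h : H),
      e v * h = h ↔ ∀ s, ∃ m : ℕ, (x s - algebraMap k H (ch (v s))) ^ m * h = 0)
    (hmemR : ∀ (v : Fin n → ZMod eN) (h : H),
      h * e v = h ↔ ∀ s, ∃ m : ℕ, h * (x s - algebraMap k H (ch (v s))) ^ m = 0)
    (i : Fin n → ZMod eN) (hi : i r ≠ 0) (hchi : ch (i r) ≠ 0)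
    (j : Fin n → ZMod eN) (hj : ∀ s, j s = i s - (a s r : ZMod eN) * i r)
    (ui uj : H)
    (hui : ui * (x r * e i) = e i ∧ (x r * e i) * ui = e i ∧ e i * ui * e i = ui)
    (huj : uj * (x r * e j) = e j ∧ (x r * e j) * uj = e j ∧ e j * uj * e j = uj) :
    t * e i = e j * t + uj - ui := by
  -- basic commutation facts
  have hxx : ∀ s s', x s * x s' = x s' * x s := by
    intro s s'
    rw [← hπ s, ← hπ s', ← map_mul, ← map_mul, mul_comm]
  have hDX : ∀ s, D (MvPolynomial.X s) = -((a s r : MvPolynomial (Fin n) k)) := by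
    intro s
    have h := hD (MvPolynomial.X s)
    rw [hσ s] at h
    have h2 : MvPolynomial.X (R := k) r * D (MvPolynomial.X s)
        = MvPolynomial.X r * (-(a s r : MvPolynomial (Fin n) k)) := by
      rw [h]; push_cast [zsmul_eq_mul]; ring
    exact mul_left_cancel₀ (MvPolynomial.X_ne_zero r) h2
  have hts : ∀ s, t * x s = (x s - (a s r : H) * x r) * t - (a s r : H) := by
    intro s
    have h := ht (MvPolynomial.X s)
    rw [hσ s, hDX s, hπ s] at h
    rw [map_sub, map_neg, map_intCast, map_zsmul, hπ s, hπ r, zsmul_eq_mul] at h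
    rw [h]; rw [sub_eq_add_neg ((x s - (a s r : H) * x r) * t)]
  set φ := x r * t + 1 with hφdef
  have hφx : ∀ s, φ * x s = (x s - (a s r : H) * x r) * φ := by
    intro s
    have hc : x r * (x s * t) = x s * (x r * t) := by
      rw [← mul_assoc, hxx r s, mul_assoc]
    have hb : x r * (a s r : H) = (a s r : H) * x r := (Int.cast_commute (a s r) (x r)).symm
    rw [hφdef, add_mul, one_mul, mul_assoc, hts s]
    have hb2 : x r * ((a s r : H) * (x r * t)) = (a s r : H) * (x r * (x r * t)) := by
      rw [← mul_assoc, hb, mul_assoc]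
    simp only [mul_sub, sub_mul, mul_add, add_mul, mul_one, one_mul, mul_assoc]
    rw [hc, hb, hb2]
    abel
  have hφx' : ∀ s, x s * φ = φ * (x s - (a s r : H) * x r) := by
    intro s
    have hbφ : φ * ((a s r : H) * x r) = (a s r : H) * (φ * x r) := by
      rw [← mul_assoc, ← (Int.cast_commute (a s r) φ).eq, mul_assoc]
    have h2 : x r - ((a r r : ℤ) : H) * x r = -x r := by
      rw [harr]; push_cast [two_mul]; abel
    rw [mul_sub, hbφ, hφx r, h2, hφx s]
    simp only [sub_mul, neg_mul, mul_neg, mul_sub, mul_assoc]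
    abel
  have S1 : ∀ s (z : k), SemiconjBy φ (x s - algebraMap k H z)
      ((x s - (a s r : H) * x r) - algebraMap k H z) :=
    fun s z => SemiconjBy.sub_right (hφx s) (Algebra.commutes z φ).symm
  have S2 : ∀ s (z : k), SemiconjBy φ ((x s - (a s r : H) * x r) - algebraMap k H z)
      (x s - algebraMap k H z) :=
    fun s z => SemiconjBy.sub_right ((hφx' s).symm) (Algebra.commutes z φ).symm
  -- constants
  have hcj : ∀ s, algebraMap k H (ch (j s))
      = algebraMap k H (ch (i s)) - (a s r : H) * algebraMap k H (ch (i r)) := by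
    intro s
    rw [hj s]
    simp [map_sub, map_mul, map_intCast]
  have hcjr : algebraMap k H (ch (j r)) = -(algebraMap k H (ch (i r))) := by
    rw [hcj r, harr]
    push_cast [two_mul]
    abel
  have hform : ∀ s, (x s - (a s r : H) * x r) - algebraMap k H (ch (j s))
      = (x s - algebraMap k H (ch (i s)))
        - (a s r : H) * (x r - algebraMap k H (ch (i r))) := by
    intro s
    rw [hcj s, mul_sub]
    abel
  have hform2 : ∀ s, (x s - (a s r : H) * x r) - algebraMap k H (ch (i s))
      = (x s - algebraMap k H (ch (j s)))
        - (a s r : H) * (x r - algebraMap k H (ch (j r))) := by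
    intro s
    rw [hcj s, hcjr, mul_sub, mul_neg]
    abel
  -- key nilpotency
  have hkey : ∀ (v : Fin n → ZMod eN) (s : Fin n), ∃ m,
      ((x s - algebraMap k H (ch (v s)))
        - (a s r : H) * (x r - algebraMap k H (ch (v r)))) ^ m * e v = 0 ∧
      e v * ((x s - algebraMap k H (ch (v s)))
        - (a s r : H) * (x r - algebraMap k H (ch (v r)))) ^ m = 0 := by
    intro v s
    refine aux_nilp _ _ _ _ ?_ ?_ ?_ ?_ ?_ ?_ (hidem v)
      ((hmemL v (e v)).mp (hidem v) s) ((hmemL v (e v)).mp (hidem v) r)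
    · exact Commute.sub_left
        (Commute.sub_right (hxx s r) ((Algebra.commutes _ (x s)).symm))
        (Commute.sub_right (Algebra.commutes _ (x r)) (Algebra.commutes _ _))
    · exact Commute.sub_left (hxe v s) (Algebra.commutes _ (e v))
    · exact Commute.sub_left (hxe v r) (Algebra.commutes _ (e v))
    · exact Commute.sub_right (Int.cast_commute _ _) (Int.cast_commute _ _)
    · exact Commute.sub_right (Int.cast_commute _ _) (Int.cast_commute _ _)
    · exact Int.cast_commute _ _
  -- the two main membership facts
  have hL : e j * (φ * e i) = φ * e i := by
    rw [hmemL j (φ * e i)]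
    intro s
    obtain ⟨m, hm, -⟩ := hkey i s
    refine ⟨m, ?_⟩
    have hps : φ * ((x s - (a s r : H) * x r) - algebraMap k H (ch (j s))) ^ m
        = (x s - algebraMap k H (ch (j s))) ^ m * φ := (S2 s (ch (j s))).pow_right m
    rw [← mul_assoc, ← hps, mul_assoc, hform s, hm, mul_zero]
  have hR : (e j * φ) * e i = e j * φ := by
    rw [hmemR i (e j * φ)]
    intro s
    obtain ⟨m, -, hm⟩ := hkey j s
    refine ⟨m, ?_⟩
    have hps : φ * (x s - algebraMap k H (ch (i s))) ^ m
        = ((x s - (a s r : H) * x r) - algebraMap k H (ch (i s))) ^ m * φ :=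
      (S1 s (ch (i s))).pow_right m
    rw [mul_assoc, hps, ← mul_assoc, hform2 s, hm, zero_mul]
  -- absorption facts for ui, uj
  have heui : e i * ui = ui := by
    nth_rewrite 1 [← hui.2.2]
    rw [← mul_assoc, ← mul_assoc, hidem i, hui.2.2]
  have huie : ui * e i = ui := by
    nth_rewrite 1 [← hui.2.2]
    rw [mul_assoc, hidem i, hui.2.2]
  have heuj : e j * uj = uj := by
    nth_rewrite 1 [← huj.2.2]
    rw [← mul_assoc, ← mul_assoc, hidem j, huj.2.2]
  have huje : uj * e j = uj := by
    nth_rewrite 1 [← huj.2.2]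
    rw [mul_assoc, hidem j, huj.2.2]
  -- t with x r
  have htx : t * x r = -(x r * t) - ((a r r : ℤ) : H) := by
    have h2 : x r - ((a r r : ℤ) : H) * x r = -x r := by
      rw [harr]; push_cast [two_mul]; abel
    rw [hts r, h2, neg_mul]
  -- component vanishing: e v * t * e i = 0 for v ∉ {i, j}
  have hA : ∀ v, v ≠ i → v ≠ j → e v * (t * e i) = 0 := by
    intro v hvi hvj
    have hexp : φ * e i = x r * (t * e i) + e i := by
      rw [hφdef, add_mul, one_mul, mul_assoc]
    have hy1 : x r * (e v * (t * e i)) = 0 := by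
      have h0 : e v * (φ * e i) = 0 := by
        rw [← hL, ← mul_assoc, horth v j hvj, zero_mul]
      rw [hexp, mul_add, horth v i hvi, add_zero, ← mul_assoc, ← hxe v r,
        mul_assoc] at h0
      exact h0
    have hy2 : (e v * (t * e i)) * x r = 0 := by
      have step1 : (e v * (t * e i)) * x r = e v * ((t * x r) * e i) := by
        rw [mul_assoc, mul_assoc, ← hxe i r, ← mul_assoc t (x r) (e i)]
      rw [step1, htx, sub_mul, neg_mul, mul_sub, mul_neg, mul_assoc,
        ← mul_assoc (e v) (x r) (t * e i), ← hxe v r,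
        mul_assoc (x r) (e v) (t * e i), hy1, neg_zero, zero_sub,
        neg_eq_zero, ← mul_assoc, ← (Int.cast_commute (a r r) (e v)).eq,
        mul_assoc, horth v i hvi, mul_zero]
    have hmem : (e v * (t * e i)) * e i = e v * (t * e i) := by
      rw [mul_assoc, mul_assoc, hidem i]
    obtain ⟨m, hm⟩ := (hmemR i (e v * (t * e i))).mp hmem r
    have hpow : ∀ m : ℕ, (e v * (t * e i)) * (x r - algebraMap k H (ch (i r))) ^ m
        = ((-(ch (i r))) ^ m) • (e v * (t * e i)) := by
      intro m
      induction m with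
      | zero => simp
      | succ m ih =>
        rw [pow_succ, ← mul_assoc, ih, smul_mul_assoc, mul_sub, hy2, zero_sub,
          ← Algebra.commutes (ch (i r)) (e v * (t * e i)), ← Algebra.smul_def,
          ← neg_smul, smul_smul, ← pow_succ]
    have hc0 : ((-(ch (i r))) ^ m) ≠ 0 := pow_ne_zero _ (neg_ne_zero.mpr hchi)
    have h0 : ((-(ch (i r))) ^ m) • (e v * (t * e i)) = 0 := (hpow m).symm.trans hm
    calc e v * (t * e i)
        = ((-(ch (i r))) ^ m)⁻¹ • (((-(ch (i r))) ^ m) • (e v * (t * e i))) := by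
          rw [smul_smul, inv_mul_cancel₀ hc0, one_smul]
      _ = 0 := by rw [h0, smul_zero]
  -- e j * t * e w = 0 for w ∉ {i, j}
  have hB : ∀ w, w ≠ i → w ≠ j → e j * (t * e w) = 0 := by
    intro w hwi hwj
    have h0 : (e j * φ) * e w = 0 := by
      rw [← hR, mul_assoc, horth i w (fun h => hwi h.symm), mul_zero]
    have hexp : (e j * φ) * e w = x r * (e j * (t * e w)) + e j * e w := by
      rw [hφdef, mul_add, mul_one, add_mul, ← mul_assoc (e j) (x r) t,
        ← hxe j r, mul_assoc (x r) (e j) t, mul_assoc (x r) (e j * t) (e w),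
        mul_assoc (e j) t (e w)]
    rw [hexp, horth j w (fun h => hwj h.symm), add_zero] at h0
    calc e j * (t * e w) = (uj * (x r * e j)) * (t * e w) := by rw [huj.1]
      _ = uj * (x r * (e j * (t * e w))) := by rw [mul_assoc, mul_assoc]
      _ = 0 := by rw [h0, mul_zero]
  -- diagonal values (when i ≠ j)
  have hC : i ≠ j → e i * (t * e i) = -ui := by
    intro hij
    have h0 : e i * (φ * e i) = 0 := by
      rw [← hL, ← mul_assoc, horth i j hij, zero_mul]
    have hexp : e i * (φ * e i) = x r * (e i * (t * e i)) + e i := by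
      rw [hφdef, add_mul, one_mul, mul_assoc, mul_add, ← mul_assoc (e i) (x r)
        (t * e i), ← hxe i r, mul_assoc (x r) (e i) (t * e i), hidem i]
    rw [hexp] at h0
    have hx0 : x r * (e i * (t * e i)) = -e i := eq_neg_of_add_eq_zero_left h0
    calc e i * (t * e i) = (ui * (x r * e i)) * (t * e i) := by rw [hui.1]
      _ = ui * (x r * (e i * (t * e i))) := by rw [mul_assoc, mul_assoc]
      _ = -ui := by rw [hx0, mul_neg, huie]
  have hDj : i ≠ j → e j * (t * e j) = -uj := by
    intro hij
    have h0 : (e j * φ) * e j = 0 := by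
      rw [← hR, mul_assoc, horth i j hij, mul_zero]
    have hexp : (e j * φ) * e j = x r * (e j * (t * e j)) + e j := by
      rw [hφdef, mul_add, mul_one, add_mul, ← mul_assoc (e j) (x r) t,
        ← hxe j r, mul_assoc (x r) (e j) t, mul_assoc (x r) (e j * t) (e j),
        mul_assoc (e j) t (e j), hidem j]
    rw [hexp] at h0
    have hx0 : x r * (e j * (t * e j)) = -e j := eq_neg_of_add_eq_zero_left h0
    calc e j * (t * e j) = (uj * (x r * e j)) * (t * e j) := by rw [huj.1]
      _ = uj * (x r * (e j * (t * e j))) := by rw [mul_assoc, mul_assoc]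
      _ = -uj := by rw [hx0, mul_neg, huje]
  -- decomposition of e j * t
  have hsdecomp : ∀ (v : Fin n → ZMod eN), e v * t = ∑ w, e v * (t * e w) := by
    intro v
    calc e v * t = e v * (t * ∑ w, e w) := by rw [hsum, mul_one]
      _ = ∑ w, e v * (t * e w) := by rw [Finset.mul_sum, Finset.mul_sum]
  -- per-component vanishing of the difference
  have hcomp : ∀ v, e v * (t * e i - (e j * t + uj - ui)) = 0 := by
    intro v
    have hexpand : e v * (t * e i - (e j * t + uj - ui))
        = e v * (t * e i) - ((e v * e j) * t + e v * uj - e v * ui) := by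
      simp only [mul_sub, mul_add]; rw [← mul_assoc (e v) (e j) t]
    rw [hexpand]
    by_cases hvi : v = i
    · subst hvi
      by_cases hij : v = j
      · -- v = i = j
        subst hij
        have huji : uj = ui := by
          calc uj = uj * e v := huje.symm
            _ = uj * ((x r * e v) * ui) := by rw [hui.2.1]
            _ = (uj * (x r * e v)) * ui := (mul_assoc uj (x r * e v) ui).symm
            _ = e v * ui := by rw [huj.1]
            _ = ui := heui
        have hvt : e v * t = e v * (t * e v) := by
          rw [hsdecomp v, ← Finset.sum_subset (Finset.subset_univ {v})
            (fun w _ hw => hB w ?_ ?_), Finset.sum_singleton]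
          · intro h; exact hw (by simp [h])
          · intro h; exact hw (by simp [h])
        rw [hidem v, ← hvt, huji, heui]
        abel
      · -- v = i ≠ j
        have hij' : e v * e j = 0 := horth v j hij
        have hvuj : e v * uj = 0 := by
          rw [← heuj, ← mul_assoc, hij', zero_mul]
        rw [hC hij, hij', hvuj, heui, zero_mul]
        abel
    · by_cases hvj : v = j
      · -- v = j ≠ i
        subst hvj
        have hji : e v * e i = 0 := horth v i hvi
        have hvui : e v * ui = 0 := by
          rw [← heui, ← mul_assoc, hji, zero_mul]
        have hij : i ≠ v := fun h => hvi h.symm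
        have hvt : e v * t = e v * (t * e i) + e v * (t * e v) := by
          rw [hsdecomp v, ← Finset.sum_subset (Finset.subset_univ {i, v})
            (fun w _ hw => hB w ?_ ?_), Finset.sum_pair hij]
          · intro h; exact hw (by simp [h])
          · intro h; exact hw (by simp [h])
        rw [hidem v, hvt, hDj hij, heuj, hvui]
        abel
      · -- generic v
        have hvuj : e v * uj = 0 := by
          rw [← heuj, ← mul_assoc, horth v j hvj, zero_mul]
        have hvui : e v * ui = 0 := by
          rw [← heui, ← mul_assoc, horth v i hvi, zero_mul]
        rw [hA v hvi hvj, horth v j hvj, hvuj, hvui, zero_mul]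
        abel
  -- sum up
  have hZ : t * e i - (e j * t + uj - ui) = 0 := by
    have h1 : (∑ v, e v) * (t * e i - (e j * t + uj - ui))
        = t * e i - (e j * t + uj - ui) := by rw [hsum, one_mul]
    rw [Finset.sum_mul] at h1
    rw [← h1]
    exact Finset.sum_eq_zero (fun v _ => hcomp v)
  exact sub_eq_zero.mp hZ
end

section
/- In the cyclotomic non-degenerate affine Hecke algebra H_q(Λ), for i with i_r = 0 one has T_r e(i) = e(i) T_r, and for i with i_r ≠ 0 one has T_r e(i) = e(σ_r(i)) T_r + (1-q)(1-X_r)^{-1} e(σ_r(i)) - (1-q)(1-X_r)^{-1} e(i). -/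
/-- Monomial `X^m` in the multivariate Laurent polynomial ring, modelled as the
group algebra of the lattice `Fin n →₀ ℤ`. -/
noncomputable def laurentMonomial (k : Type*) [CommRing k] (n : ℕ)
    (m : Fin n →₀ ℤ) : AddMonoidAlgebra k (Fin n →₀ ℤ) :=
  AddMonoidAlgebra.single m 1

section aux
variable {k : Type*} [CommSemiring k] {H : Type*} [Ring H] [Algebra k H]

lemma aux_calg (α : k) (z : H) : Commute (algebraMap k H α) z := Algebra.commutes α z

lemma aux_cinv {A B C : H} (hAB : A * B = 1) (hBA : B * A = 1)
    (hAC : Commute A C) : Commute B C := by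
  have h1 : B * C = B * C * A * B := by rw [mul_assoc, hAB, mul_one]
  have h2 : B * C * A * B = B * A * C * B := by
    rw [mul_assoc B C A, ← hAC.eq, ← mul_assoc]
  show B * C = C * B
  rw [h1, h2, hBA, one_mul]

lemma aux_pow_mul_e {A E : H} (hAE : Commute A E) (hEE : E * E = E) (m : ℕ) :
    (A * E) ^ (m + 1) = A ^ (m + 1) * E := by
  induction m with
  | zero => simp
  | succ p ih =>
    rw [pow_succ, ih]
    have h : E * (A * E) = A * E := by rw [← mul_assoc, ← hAE.eq, mul_assoc, hEE]
    rw [mul_assoc, h, ← mul_assoc, ← pow_succ]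

lemma aux_nil_to_pow {A E : H} (hAE : Commute A E) (hEE : E * E = E)
    (h : IsNilpotent (A * E)) : ∃ M, A ^ M * E = 0 := by
  obtain ⟨m, hm⟩ := h
  refine ⟨m + 1, ?_⟩
  rw [← aux_pow_mul_e hAE hEE m, pow_succ, hm, zero_mul]

lemma aux_pow_to_nil {A E : H} (hAE : Commute A E) (hEE : E * E = E)
    (h : ∃ M, A ^ M * E = 0) : IsNilpotent (A * E) := by
  obtain ⟨M, hM⟩ := h
  refine ⟨M + 1, ?_⟩
  rw [aux_pow_mul_e hAE hEE M, pow_succ', mul_assoc, hM, mul_zero]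

lemma aux_epow {A E : H} {M : ℕ} (h0 : A ^ M * E = 0) {m : ℕ} (hle : M ≤ m) :
    A ^ m * E = 0 := by
  rw [show m = (m - M) + M from (Nat.sub_add_cancel hle).symm, pow_add, mul_assoc, h0, mul_zero]

lemma aux_nilprod {A B E : H} {α β : k} (hAB : Commute A B) (hAE : Commute A E)
    (hBE : Commute B E) (hEE : E * E = E)
    (hA : IsNilpotent ((A - algebraMap k H α) * E))
    (hB : IsNilpotent ((B - algebraMap k H β) * E)) :
    IsNilpotent ((A * B - algebraMap k H (α * β)) * E) := by
  have cA' : Commute (A - algebraMap k H α) E := hAE.sub_left (aux_calg α E)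
  have cB' : Commute (B - algebraMap k H β) E := hBE.sub_left (aux_calg β E)
  have cAB' : Commute (A - algebraMap k H α) (B - algebraMap k H β) :=
    (hAB.sub_left (aux_calg α B)).sub_right ((aux_calg β _).symm)
  have key : (A * B - algebraMap k H (α * β)) * E
      = ((A - algebraMap k H α) * E) * B
        + (algebraMap k H α) * ((B - algebraMap k H β) * E) := by
    rw [map_mul, mul_assoc (A - algebraMap k H α) E B, hBE.symm.eq]
    noncomm_ring
  rw [key]
  have c1 : Commute ((A - algebraMap k H α) * E) B :=
    Commute.mul_left (hAB.sub_left (aux_calg α B)) hBE.symm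
  have t1 : Commute ((A - algebraMap k H α) * E) ((B - algebraMap k H β) * E) :=
    (cAB'.mul_right cA').mul_left ((cB'.symm).mul_right (Commute.refl E))
  have cBrest : Commute B ((B - algebraMap k H β) * E) :=
    ((Commute.refl B).sub_right ((aux_calg β B).symm)).mul_right hBE
  have ccomm : Commute (((A - algebraMap k H α) * E) * B)
      (algebraMap k H α * ((B - algebraMap k H β) * E)) :=
    Commute.mul_left (((aux_calg α _).symm).mul_right t1)
      (((aux_calg α B).symm).mul_right cBrest)
  exact ccomm.isNilpotent_add (c1.isNilpotent_mul_right hA)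
    ((aux_calg α _).isNilpotent_mul_left hB)

lemma aux_nilinv {A A' E : H} {α β : k} (h1 : A * A' = 1) (h2 : A' * A = 1)
    (hαβ : α * β = 1) (hAE : Commute A E)
    (hA : IsNilpotent ((A - algebraMap k H α) * E)) :
    IsNilpotent ((A' - algebraMap k H β) * E) := by
  have cA'E : Commute A' E := aux_cinv h1 h2 hAE
  have hba : algebraMap k H β * algebraMap k H α = 1 := by
    rw [← map_mul, mul_comm, hαβ, map_one]
  have key : (A' - algebraMap k H β) * E
      = ((-(algebraMap k H β)) * A') * ((A - algebraMap k H α) * E) := by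
    have hh : A' * (A - algebraMap k H α) = 1 - algebraMap k H α * A' := by
      rw [mul_sub, h2, ← Algebra.commutes]
    symm
    calc ((-(algebraMap k H β)) * A') * ((A - algebraMap k H α) * E)
        = (-(algebraMap k H β)) * (A' * (A - algebraMap k H α)) * E := by
          rw [mul_assoc, mul_assoc, ← mul_assoc A', mul_assoc]
      _ = (-(algebraMap k H β)) * (1 - algebraMap k H α * A') * E := by rw [hh]
      _ = (A' - algebraMap k H β) * E := by
          congr 1
          rw [neg_mul, mul_sub, mul_one, ← mul_assoc, hba, one_mul, neg_sub]
  rw [key]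
  have cA'A : Commute A' A := h2.trans h1.symm
  have comm : Commute ((-(algebraMap k H β)) * A') ((A - algebraMap k H α) * E) :=
    Commute.mul_left ((aux_calg β _).neg_left)
      (Commute.mul_right (cA'A.sub_right ((aux_calg α A').symm)) cA'E)
  exact comm.isNilpotent_mul_left hA

end aux

/-- In the cyclotomic non-degenerate affine Hecke algebra `H_q(Λ)` (axiomatized by:
invertible commuting elements `X_s` (images of the Laurent monomials), the quadratic
relation `(T_r+1)(T_r-q) = 0`, the relation `T_r f = σ_r(f) T_r + (1-q) D_r(f)` for
Laurent polynomials `f`, with `σ_r(X_s) = X_s X_r^{-a_{sr}}` and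
`D_r(f) = (σ_r(f)-f)/(1-X_r)`, and orthogonal generalized-eigenspace idempotents
`e(i)`, `i ∈ I^n`, summing to `1` and characterized by
`e(i)h = h ↔ (X_s - q^{i_s})^m h = 0` for all `s` and `m ≫ 0`, likewise on the right),
one has: `T_r e(i) = e(i) T_r` when `i_r = 0`, and
`T_r e(i) = e(σ_r(i)) T_r + (1-q)(1-X_r)⁻¹ e(σ_r(i)) - (1-q)(1-X_r)⁻¹ e(i)`
when `i_r ≠ 0`, where `(1-X_r)⁻¹ e(j)` denotes the corner inverse of `(1-X_r) e(j)`. -/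
theorem stmt_18 (k : Type*) [Field k] (n eN : ℕ) [NeZero eN]
    (q : k) (hq0 : q ≠ 0) (hq1 : q ≠ 1) (hqe : q ^ eN = 1)
    (horderq : ∀ m : ℕ, 0 < m → m < eN → q ^ m ≠ 1)
    (a : Fin n → Fin n → ℤ)
    (H : Type*) [Ring H] [Algebra k H]
    (x : Fin n → H) (T : H) (r : Fin n) (harr : a r r = 2)
    (π : AddMonoidAlgebra k (Fin n →₀ ℤ) →ₐ[k] H)
    (hπ : ∀ s, π (laurentMonomial k n (Finsupp.single s 1)) = x s)
    (σ : AddMonoidAlgebra k (Fin n →₀ ℤ) →ₐ[k] AddMonoidAlgebra k (Fin n →₀ ℤ))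
    (hσ : ∀ s, σ (laurentMonomial k n (Finsupp.single s 1)) =
      laurentMonomial k n (Finsupp.single s 1 - (a s r) • Finsupp.single r 1))
    (D : AddMonoidAlgebra k (Fin n →₀ ℤ) → AddMonoidAlgebra k (Fin n →₀ ℤ))
    (hD : ∀ f, (1 - laurentMonomial k n (Finsupp.single r 1)) * D f = σ f - f)
    (hquad : (T + 1) * (T - algebraMap k H q) = 0)
    (hT : ∀ f, T * π f = π (σ f) * T + algebraMap k H (1 - q) * π (D f))
    (e : (Fin n → ZMod eN) → H)
    (hidem : ∀ v, e v * e v = e v)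
    (horth : ∀ v w, v ≠ w → e v * e w = 0)
    (hsum : ∑ v, e v = 1)
    (hxe : ∀ v s, x s * e v = e v * x s)
    (hmemL : ∀ (v : Fin n → ZMod eN) (h : H),
      e v * h = h ↔ ∀ s, ∃ m : ℕ, (x s - algebraMap k H (q ^ (v s).val)) ^ m * h = 0)
    (hmemR : ∀ (v : Fin n → ZMod eN) (h : H),
      h * e v = h ↔ ∀ s, ∃ m : ℕ, h * (x s - algebraMap k H (q ^ (v s).val)) ^ m = 0)
    (i : Fin n → ZMod eN)
    (j : Fin n → ZMod eN) (hj : ∀ s, j s = i s - (a s r : ZMod eN) * i r)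
    (ui uj : H)
    (hui : i r ≠ 0 →
      ui * ((1 - x r) * e i) = e i ∧ ((1 - x r) * e i) * ui = e i ∧
        e i * ui * e i = ui)
    (huj : i r ≠ 0 →
      uj * ((1 - x r) * e j) = e j ∧ ((1 - x r) * e j) * uj = e j ∧
        e j * uj * e j = uj) :
    (i r = 0 → T * e i = e i * T) ∧
    (i r ≠ 0 → T * e i = e j * T +
      algebraMap k H (1 - q) * uj - algebraMap k H (1 - q) * ui) := by
  classical
  -- Laurent monomial basics
  have LMmul : ∀ m m' : Fin n →₀ ℤ,
      laurentMonomial k n m * laurentMonomial k n m' = laurentMonomial k n (m + m') := by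
    intro m m'
    simp [laurentMonomial, AddMonoidAlgebra.single_mul_single]
  have LM0 : laurentMonomial k n 0 = 1 := by
    rw [laurentMonomial, AddMonoidAlgebra.one_def]
  have hππ : ∀ f g : AddMonoidAlgebra k (Fin n →₀ ℤ), π f * π g = π g * π f := by
    intro f g; rw [← map_mul, ← map_mul, mul_comm]
  -- q-power arithmetic
  have hqmod : ∀ m : ℕ, q ^ (m % eN) = q ^ m := by
    intro m
    conv_rhs => rw [← Nat.div_add_mod m eN]
    rw [pow_add, pow_mul, hqe, one_pow, one_mul]
  have kadd : ∀ cz dz : ZMod eN, q ^ (cz + dz).val = q ^ cz.val * q ^ dz.val := by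
    intro cz dz; rw [ZMod.val_add, hqmod, pow_add]
  have kone : q ^ (0 : ZMod eN).val = 1 := by rw [ZMod.val_zero, pow_zero]
  have kinv : ∀ cz : ZMod eN, q ^ cz.val * q ^ (-cz).val = 1 := by
    intro cz; rw [← kadd, add_neg_cancel, kone]
  -- commutation of the commutative part with the idempotents
  have mono_e : ∀ (v) (m : Fin n →₀ ℤ), Commute (π (laurentMonomial k n m)) (e v) := by
    intro v m
    induction m using Finsupp.induction_linear with
    | zero => rw [LM0, map_one]; exact Commute.one_left _
    | add f g hf hg => rw [← LMmul, map_mul]; exact hf.mul_left hg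
    | single s b =>
      have hxs : Commute (π (laurentMonomial k n (Finsupp.single s 1))) (e v) := by
        rw [hπ]; exact hxe v s
      have hone : ∀ b' : ℤ, π (laurentMonomial k n (Finsupp.single s b')) *
          π (laurentMonomial k n (Finsupp.single s (-b'))) = 1 := by
        intro b'
        rw [← map_mul, LMmul, ← Finsupp.single_add, add_neg_cancel, Finsupp.single_zero,
          LM0, map_one]
      have hxsinv : Commute (π (laurentMonomial k n (Finsupp.single s (-1)))) (e v) :=
        aux_cinv (hone 1) (by simpa using hone (-1)) hxs
      induction b using Int.induction_on with
      | zero => rw [Finsupp.single_zero, LM0, map_one]; exact Commute.one_left _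
      | succ bn ih =>
        have : Finsupp.single s ((bn : ℤ) + 1)
            = Finsupp.single s (bn : ℤ) + Finsupp.single s 1 := by
          rw [← Finsupp.single_add]
        rw [this, ← LMmul, map_mul]
        exact ih.mul_left hxs
      | pred bn ih =>
        have : Finsupp.single s (-(bn : ℤ) - 1)
            = Finsupp.single s (-(bn : ℤ)) + Finsupp.single s (-1) := by
          rw [← Finsupp.single_add]; ring_nf
        rw [this, ← LMmul, map_mul]
        exact ih.mul_left hxsinv
  have F1 : ∀ (v) (f : AddMonoidAlgebra k (Fin n →₀ ℤ)), Commute (π f) (e v) := by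
    intro v f
    induction f using AddMonoidAlgebra.induction_on with
    | of m => exact mono_e v m
    | add f g hf hg => rw [map_add]; exact hf.add_left hg
    | smul rr f hf => rw [map_smul]; exact hf.smul_left rr

  have spec0 : ∀ v s, ∃ M, (x s - algebraMap k H (q ^ ((v s).val))) ^ M * e v = 0 :=
    fun v s => ((hmemL v (e v)).mp (hidem v)) s
  have cxe : ∀ v s, Commute (x s) (e v) := hxe
  have spec0' : ∀ v s, IsNilpotent ((x s - algebraMap k H (q ^ ((v s).val))) * e v) :=
    fun v s => aux_pow_to_nil ((cxe v s).sub_left (aux_calg _ _)) (hidem v) (spec0 v s)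
  have hone_r : ∀ b' : ℤ, π (laurentMonomial k n (Finsupp.single r b')) *
      π (laurentMonomial k n (Finsupp.single r (-b'))) = 1 := by
    intro b'
    rw [← map_mul, LMmul, ← Finsupp.single_add, add_neg_cancel, Finsupp.single_zero, LM0, map_one]
  set B1 : H := π (laurentMonomial k n (Finsupp.single r (-1))) with hB1def
  have hB1a : x r * B1 = 1 := by rw [hB1def, ← hπ r]; exact hone_r 1
  have hB1b : B1 * x r = 1 := by rw [hB1def, ← hπ r]; simpa using hone_r (-1)
  have specr : ∀ (v) (b : ℤ), IsNilpotent
      ((π (laurentMonomial k n (Finsupp.single r b))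
        - algebraMap k H (q ^ ((b • v r).val))) * e v) := by
    intro v b
    have nilB1 : IsNilpotent ((B1 - algebraMap k H (q ^ ((-(v r)).val))) * e v) :=
      aux_nilinv hB1a hB1b (kinv (v r)) (cxe v r) (spec0' v r)
    induction b using Int.induction_on with
    | zero =>
      rw [Finsupp.single_zero, LM0, map_one, zero_smul, kone, map_one, sub_self, zero_mul]
      exact IsNilpotent.zero
    | succ bn ih =>
      have hsplit : laurentMonomial k n (Finsupp.single r ((bn:ℤ)+1))
          = laurentMonomial k n (Finsupp.single r (bn:ℤ))
            * laurentMonomial k n (Finsupp.single r 1) := by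
        rw [LMmul, ← Finsupp.single_add]
      have hval : (((bn:ℤ)+1) • v r) = (bn:ℤ) • v r + v r := by
        rw [add_smul, one_smul]
      rw [hsplit, map_mul, hπ, hval, kadd]
      exact aux_nilprod (by rw [← hπ r]; exact hππ _ _) (mono_e v _) (cxe v r) (hidem v)
        ih (spec0' v r)
    | pred bn ih =>
      have harith : (-(bn:ℤ)) + (-1) = -(bn:ℤ) - 1 := by ring
      have hsplit : laurentMonomial k n (Finsupp.single r (-(bn:ℤ)-1))
          = laurentMonomial k n (Finsupp.single r (-(bn:ℤ)))
            * laurentMonomial k n (Finsupp.single r (-1)) := by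
        rw [LMmul, ← Finsupp.single_add, harith]
      have hval : ((-(bn:ℤ)-1) • v r) = (-(bn:ℤ)) • v r + (-(v r)) := by
        rw [sub_smul, one_smul, sub_eq_add_neg]
      rw [hsplit, map_mul, hval, kadd]
      exact aux_nilprod (hππ _ _) (mono_e v _) (mono_e v _) (hidem v) ih nilB1
  have specY : ∀ v s, ∃ M,
      (π (laurentMonomial k n (Finsupp.single s 1 + Finsupp.single r (-(a s r))))
        - algebraMap k H (q ^ ((v s + (-(a s r) : ℤ) • v r).val))) ^ M * e v = 0 := by
    intro v s
    apply aux_nil_to_pow ((mono_e v _).sub_left (aux_calg _ _)) (hidem v)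
    apply aux_pow_to_nil ((mono_e v _).sub_left (aux_calg _ _)) (hidem v)
    apply aux_nil_to_pow ((mono_e v _).sub_left (aux_calg _ _)) (hidem v)
    have hsplit : laurentMonomial k n (Finsupp.single s 1 + Finsupp.single r (-(a s r)))
        = laurentMonomial k n (Finsupp.single s 1)
          * laurentMonomial k n (Finsupp.single r (-(a s r))) := (LMmul _ _).symm
    rw [hsplit, map_mul, hπ, kadd]
    exact aux_nilprod (by rw [← hπ s]; exact hππ _ _) (cxe v s) (mono_e v _) (hidem v)
      (spec0' v s) (specr v (-(a s r)))

  have smul_single_int : ∀ (t : Fin n) (cz : ℤ),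
      cz • Finsupp.single t (1:ℤ) = Finsupp.single t cz := by
    intro t cz; rw [Finsupp.smul_single, smul_eq_mul, mul_one]
  have sig_base : σ (laurentMonomial k n (Finsupp.single r 1))
      = laurentMonomial k n (Finsupp.single r (-1)) := by
    rw [hσ r, harr, smul_single_int]
    congr 1
    rw [← Finsupp.single_sub]
    norm_num
  have sigr : ∀ b : ℤ, σ (laurentMonomial k n (Finsupp.single r b))
      = laurentMonomial k n (Finsupp.single r (-b)) := by
    intro b
    induction b using Int.induction_on with
    | zero => rw [Finsupp.single_zero, LM0, map_one, neg_zero, Finsupp.single_zero, LM0]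
    | succ bn ih =>
      have h1 : Finsupp.single r ((bn:ℤ)+1) = Finsupp.single r (bn:ℤ) + Finsupp.single r 1 := by
        rw [← Finsupp.single_add]
      rw [h1, ← LMmul, map_mul, ih, sig_base, LMmul, ← Finsupp.single_add]
      congr 2
      ring
    | pred bn ih =>
      have e1 : σ (laurentMonomial k n (Finsupp.single r (-(bn:ℤ)-1)))
          * laurentMonomial k n (Finsupp.single r (-1))
          = laurentMonomial k n (Finsupp.single r (bn:ℤ)) := by
        have h2 : Finsupp.single r (-(bn:ℤ))
            = Finsupp.single r (-(bn:ℤ)-1) + Finsupp.single r 1 := by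
          rw [← Finsupp.single_add]; congr 1; ring
        have ih' := ih
        rw [h2, ← LMmul, map_mul, sig_base, neg_neg] at ih'
        exact ih'
      have h3 : laurentMonomial k n (Finsupp.single r (-1))
          * laurentMonomial k n (Finsupp.single r 1) = 1 := by
        rw [LMmul, ← Finsupp.single_add, neg_add_cancel, Finsupp.single_zero, LM0]
      have e2 : σ (laurentMonomial k n (Finsupp.single r (-(bn:ℤ)-1)))
          * (laurentMonomial k n (Finsupp.single r (-1))
             * laurentMonomial k n (Finsupp.single r 1))
          = laurentMonomial k n (Finsupp.single r (-(-(bn:ℤ)-1))) := by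
        rw [← mul_assoc, e1, LMmul, ← Finsupp.single_add]
        congr 2
        ring
      rw [h3, mul_one] at e2
      exact e2
  have sigY : ∀ s, σ (laurentMonomial k n (Finsupp.single s 1 + Finsupp.single r (-(a s r))))
      = laurentMonomial k n (Finsupp.single s 1) := by
    intro s
    rw [← LMmul, map_mul, hσ s, sigr (-(a s r)), neg_neg, LMmul, smul_single_int]
    congr 1
    abel
  have sigX : ∀ s, σ (laurentMonomial k n (Finsupp.single s 1))
      = laurentMonomial k n (Finsupp.single s 1 + Finsupp.single r (-(a s r))) := by
    intro s
    rw [hσ s, smul_single_int]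
    congr 1
    rw [Finsupp.single_neg]
    abel
  have F4 : ∀ (p : AddMonoidAlgebra k (Fin n →₀ ℤ)) (m : ℕ),
      T * (π p) ^ m = (π (σ p)) ^ m * T
        + algebraMap k H (1 - q)
          * (∑ t ∈ Finset.range m, (π (σ p)) ^ t * π (D p) * (π p) ^ (m - 1 - t)) := by
    intro p m
    induction m with
    | zero => simp
    | succ m ih =>
      simp only [Nat.add_sub_cancel]
      have hstep : ∀ t ∈ Finset.range m,
          (π (σ p)) ^ t * π (D p) * (π p) ^ (m - 1 - t) * (π p)
            = (π (σ p)) ^ t * π (D p) * (π p) ^ (m - t) := by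
        intro t ht
        rw [mul_assoc, ← pow_succ]
        have hmt : m - 1 - t + 1 = m - t := by
          have := Finset.mem_range.mp ht; omega
        rw [hmt]
      calc T * (π p) ^ (m+1) = (T * (π p) ^ m) * (π p) := by rw [pow_succ, mul_assoc]
        _ = ((π (σ p)) ^ m * T
              + algebraMap k H (1-q)
                * (∑ t ∈ Finset.range m, (π (σ p)) ^ t * π (D p) * (π p) ^ (m-1-t))) * (π p) := by
            rw [ih]
        _ = (π (σ p)) ^ m * (T * (π p))
              + algebraMap k H (1-q)
                * (∑ t ∈ Finset.range m, (π (σ p)) ^ t * π (D p) * (π p) ^ (m-t)) := by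
            rw [add_mul, mul_assoc ((π (σ p)) ^ m), mul_assoc (algebraMap k H (1-q)),
              Finset.sum_mul]
            congr 1
            congr 1
            exact Finset.sum_congr rfl hstep
        _ = (π (σ p)) ^ m * ((π (σ p)) * T + algebraMap k H (1-q) * π (D p))
              + algebraMap k H (1-q)
                * (∑ t ∈ Finset.range m, (π (σ p)) ^ t * π (D p) * (π p) ^ (m-t)) := by
            rw [hT p]
        _ = (π (σ p)) ^ (m+1) * T
              + algebraMap k H (1-q) * ((π (σ p)) ^ m * π (D p) * (π p) ^ (m - m)
                 + ∑ t ∈ Finset.range m, (π (σ p)) ^ t * π (D p) * (π p) ^ (m-t)) := by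
            have hc : (π (σ p)) ^ m * (algebraMap k H (1-q) * π (D p))
                = algebraMap k H (1-q) * ((π (σ p)) ^ m * π (D p) * (π p) ^ (m - m)) := by
              rw [Nat.sub_self, pow_zero, mul_one, ← mul_assoc,
                ← (aux_calg (1-q) ((π (σ p)) ^ m)).eq, mul_assoc]
            conv_rhs => rw [mul_add, ← add_assoc]
            rw [mul_add, ← mul_assoc, ← pow_succ, hc]
        _ = (π (σ p)) ^ (m+1) * T
              + algebraMap k H (1-q)
                * (∑ t ∈ Finset.range (m+1), (π (σ p)) ^ t * π (D p) * (π p) ^ (m-t)) := by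
            congr 1
            congr 1
            rw [Finset.sum_range_succ, Nat.sub_self, add_comm]

  refine ⟨?_, ?_⟩
  · -- Case i r = 0
    intro hir0
    have hL : e i * (T * e i) = T * e i := by
      rw [hmemL]
      intro s
      set lam := q ^ ((i s).val) with hlam
      set p : AddMonoidAlgebra k (Fin n →₀ ℤ) :=
        laurentMonomial k n (Finsupp.single s 1 + Finsupp.single r (-(a s r)))
          - algebraMap k (AddMonoidAlgebra k (Fin n →₀ ℤ)) lam with hp
      have hπp : π p
          = π (laurentMonomial k n (Finsupp.single s 1 + Finsupp.single r (-(a s r))))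
            - algebraMap k H lam := by
        rw [hp, map_sub, AlgHom.commutes]
      have hπσp : π (σ p) = x s - algebraMap k H lam := by
        rw [hp, map_sub, AlgHom.commutes, map_sub, AlgHom.commutes, sigY, hπ]
      obtain ⟨M1, hM1⟩ := specY i s
      have hsc : (i s + (-(a s r) : ℤ) • i r) = i s := by rw [hir0, smul_zero, add_zero]
      rw [hsc] at hM1
      obtain ⟨M2, hM2⟩ := spec0 i s
      set M := max M1 M2 + 1 with hM
      have hpM : (π p) ^ M * e i = 0 := by
        rw [hπp]; exact aux_epow hM1 (by omega)
      have hspM : (π (σ p)) ^ M * e i = 0 := by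
        rw [hπσp]; exact aux_epow hM2 (by omega)
      refine ⟨2 * M, ?_⟩
      have hTp : T * ((π p) ^ (2*M) * e i) = 0 := by
        rw [aux_epow hpM (by omega), mul_zero]
      have hSum : (∑ t ∈ Finset.range (2*M), (π (σ p)) ^ t * π (D p) * (π p) ^ (2*M - 1 - t))
          * e i = 0 := by
        rw [Finset.sum_mul]
        apply Finset.sum_eq_zero
        intro t ht
        rcases le_or_gt M t with hcase | hcase
        · have c1 : Commute (π (D p) * (π p) ^ (2*M-1-t)) (e i) :=
            (F1 i (D p)).mul_left ((F1 i p).pow_left _)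
          calc (π (σ p)) ^ t * π (D p) * (π p) ^ (2*M-1-t) * e i
              = (π (σ p)) ^ t * ((π (D p) * (π p) ^ (2*M-1-t)) * e i) := by
                rw [mul_assoc ((π (σ p)) ^ t), mul_assoc ((π (σ p)) ^ t)]
            _ = ((π (σ p)) ^ t * e i) * (π (D p) * (π p) ^ (2*M-1-t)) := by
                rw [c1.eq, ← mul_assoc]
            _ = 0 := by rw [aux_epow hspM hcase, zero_mul]
        · have hle : M ≤ 2*M - 1 - t := by omega
          rw [mul_assoc, aux_epow hpM hle, mul_zero]
      have h5 : T * (π p) ^ (2*M) * e i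
          = (π (σ p)) ^ (2*M) * T * e i
            + algebraMap k H (1-q)
              * ((∑ t ∈ Finset.range (2*M), (π (σ p)) ^ t * π (D p) * (π p) ^ (2*M-1-t))
                  * e i) := by
        rw [F4 p (2*M), add_mul, mul_assoc (algebraMap k H (1-q))]
      rw [hSum, mul_zero, add_zero] at h5
      have h6 : (π (σ p)) ^ (2*M) * T * e i = 0 := by
        rw [← h5, mul_assoc, hTp]
      rw [← hπσp, ← mul_assoc]
      exact h6
    have hR : (e i * T) * e i = e i * T := by
      rw [hmemR]
      intro s
      set lam := q ^ ((i s).val) with hlam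
      set p : AddMonoidAlgebra k (Fin n →₀ ℤ) :=
        laurentMonomial k n (Finsupp.single s 1)
          - algebraMap k (AddMonoidAlgebra k (Fin n →₀ ℤ)) lam with hp
      have hπp : π p = x s - algebraMap k H lam := by
        rw [hp, map_sub, AlgHom.commutes, hπ]
      have hπσp : π (σ p)
          = π (laurentMonomial k n (Finsupp.single s 1 + Finsupp.single r (-(a s r))))
            - algebraMap k H lam := by
        rw [hp, map_sub, AlgHom.commutes, map_sub, AlgHom.commutes, sigX]
      obtain ⟨M1, hM1⟩ := specY i s
      have hsc : (i s + (-(a s r) : ℤ) • i r) = i s := by rw [hir0, smul_zero, add_zero]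
      rw [hsc] at hM1
      obtain ⟨M2, hM2⟩ := spec0 i s
      set M := max M1 M2 + 1 with hM
      have hpM : (π p) ^ M * e i = 0 := by
        rw [hπp]; exact aux_epow hM2 (by omega)
      have hspM : (π (σ p)) ^ M * e i = 0 := by
        rw [hπσp]; exact aux_epow hM1 (by omega)
      refine ⟨2 * M, ?_⟩
      have hSum : e i * (∑ t ∈ Finset.range (2*M),
          (π (σ p)) ^ t * π (D p) * (π p) ^ (2*M - 1 - t)) = 0 := by
        rw [Finset.mul_sum]
        apply Finset.sum_eq_zero
        intro t ht
        rcases le_or_gt M t with hcase | hcase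
        · have h1 : e i * ((π (σ p)) ^ t * π (D p) * (π p) ^ (2*M-1-t))
              = (e i * (π (σ p)) ^ t) * (π (D p) * (π p) ^ (2*M-1-t)) := by
            rw [mul_assoc ((π (σ p)) ^ t), ← mul_assoc]
          rw [h1, ← ((F1 i (σ p)).pow_left t).eq, aux_epow hspM hcase, zero_mul]
        · have hle : M ≤ 2*M - 1 - t := by omega
          have c2 : Commute ((π (σ p)) ^ t * π (D p)) (e i) :=
            ((F1 i (σ p)).pow_left t).mul_left (F1 i (D p))
          have h1 : e i * ((π (σ p)) ^ t * π (D p) * (π p) ^ (2*M-1-t))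
              = ((π (σ p)) ^ t * π (D p)) * (e i * (π p) ^ (2*M-1-t)) := by
            rw [← mul_assoc, ← c2.eq, mul_assoc]
          rw [h1, ← ((F1 i p).pow_left _).eq, aux_epow hpM hle, mul_zero]
      have h4 := congrArg (fun z => e i * z) (F4 p (2*M))
      simp only [mul_add] at h4
      have hA : e i * ((π (σ p)) ^ (2*M) * T) = 0 := by
        rw [← mul_assoc, ← ((F1 i (σ p)).pow_left (2*M)).eq, aux_epow hspM (by omega), zero_mul]
      have hB : e i * (algebraMap k H (1-q) * (∑ t ∈ Finset.range (2*M),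
          (π (σ p)) ^ t * π (D p) * (π p) ^ (2*M - 1 - t))) = 0 := by
        rw [← mul_assoc, ← (aux_calg (1-q) (e i)).eq, mul_assoc, hSum, mul_zero]
      rw [hA, hB, add_zero] at h4
      rw [← hπp, mul_assoc]
      exact h4
    calc T * e i = e i * (T * e i) := hL.symm
      _ = (e i * T) * e i := by rw [mul_assoc]
      _ = e i * T := hR
  · -- Case i r ≠ 0
    intro hir
    obtain ⟨hui1, hui2, hui3⟩ := hui hir
    obtain ⟨huj1, huj2, huj3⟩ := huj hir
    have uie : ui * e i = ui := by
      conv_lhs => rw [← hui3]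
      rw [mul_assoc (e i * ui), hidem i, hui3]
    have eui : e i * ui = ui := by
      conv_lhs => rw [← hui3]
      rw [← mul_assoc, ← mul_assoc, hidem i, hui3]
    have uje : uj * e j = uj := by
      conv_lhs => rw [← huj3]
      rw [mul_assoc (e j * uj), hidem j, huj3]
    have euj : e j * uj = uj := by
      conv_lhs => rw [← huj3]
      rw [← mul_assoc, ← mul_assoc, hidem j, huj3]
    have hxre : ∀ v, (1 - x r) * e v = e v * (1 - x r) := by
      intro v; rw [sub_mul, mul_sub, one_mul, mul_one, hxe]
    have oneminus : (1 : H) - x r = π (1 - laurentMonomial k n (Finsupp.single r 1)) := by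
      rw [map_sub, map_one, hπ]
    have uimul : (1 - x r) * ui = e i := by
      conv_lhs => rw [← eui]
      rw [← mul_assoc]
      exact hui2
    have uimul' : ui * (1 - x r) = e i := by
      conv_lhs => rw [← uie]
      rw [mul_assoc, ← hxre i]
      exact hui1
    have ujmul : (1 - x r) * uj = e j := by
      conv_lhs => rw [← euj]
      rw [← mul_assoc]
      exact huj2
    have ujmul' : uj * (1 - x r) = e j := by
      conv_lhs => rw [← uje]
      rw [mul_assoc, ← hxre j]
      exact huj1
    have Fui : ∀ f, ui * π f = π f * ui := by
      intro f
      have cπx : π f * (1 - x r) = (1 - x r) * π f := by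
        rw [oneminus, hππ]
      have key : ui * (π f * e i) = π f * ui := by
        calc ui * (π f * e i)
            = ui * (π f * ((1 - x r) * e i * ui)) := by rw [hui2]
          _ = ui * (((1 - x r) * π f) * e i * ui) := by
              rw [← cπx]; simp only [mul_assoc]
          _ = (ui * (1 - x r)) * (π f * (e i * ui)) := by simp only [mul_assoc]
          _ = e i * (π f * ui) := by rw [uimul', eui]
          _ = (e i * π f) * ui := by rw [← mul_assoc]
          _ = (π f * e i) * ui := by rw [(F1 i f).eq]
          _ = π f * ui := by rw [mul_assoc, eui]
      calc ui * π f = (ui * e i) * π f := by rw [uie]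
        _ = ui * (e i * π f) := by rw [mul_assoc]
        _ = ui * (π f * e i) := by rw [← (F1 i f).eq]
        _ = π f * ui := key
    have Fuj : ∀ f, uj * π f = π f * uj := by
      intro f
      have cπx : π f * (1 - x r) = (1 - x r) * π f := by
        rw [oneminus, hππ]
      have key : uj * (π f * e j) = π f * uj := by
        calc uj * (π f * e j)
            = uj * (π f * ((1 - x r) * e j * uj)) := by rw [huj2]
          _ = uj * (((1 - x r) * π f) * e j * uj) := by
              rw [← cπx]; simp only [mul_assoc]
          _ = (uj * (1 - x r)) * (π f * (e j * uj)) := by simp only [mul_assoc]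
          _ = e j * (π f * uj) := by rw [ujmul', euj]
          _ = (e j * π f) * uj := by rw [← mul_assoc]
          _ = (π f * e j) * uj := by rw [(F1 j f).eq]
          _ = π f * uj := by rw [mul_assoc, euj]
      calc uj * π f = (uj * e j) * π f := by rw [uje]
        _ = uj * (e j * π f) := by rw [mul_assoc]
        _ = uj * (π f * e j) := by rw [← (F1 j f).eq]
        _ = π f * uj := key
    have Dclaim : ∀ (u0 : H) (v0 : Fin n → ZMod eN), (1 - x r) * u0 = e v0 →
        (∀ g, u0 * π g = π g * u0) → ∀ f,
        π (D f) * e v0 + u0 * π f = π (σ f) * u0 := by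
      intro u0 v0 humul hcomm f
      have h2 : π (σ f - f) = (1 - x r) * π (D f) := by
        rw [← hD f, map_mul, oneminus]
      have h1 : π (σ f) * u0 - π f * u0 = π (D f) * e v0 := by
        calc π (σ f) * u0 - π f * u0 = π (σ f - f) * u0 := by rw [map_sub, sub_mul]
          _ = ((1 - x r) * π (D f)) * u0 := by rw [h2]
          _ = (π (D f) * (1 - x r)) * u0 := by rw [oneminus, hππ]
          _ = π (D f) * ((1 - x r) * u0) := by rw [mul_assoc]
          _ = π (D f) * e v0 := by rw [humul]
      rw [hcomm f, ← h1]
      abel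
    have twineI : ∀ f, (T * e i + algebraMap k H (1-q) * ui) * π f
        = π (σ f) * (T * e i + algebraMap k H (1-q) * ui) := by
      intro f
      have hTe : T * e i * π f = π (σ f) * (T * e i)
          + algebraMap k H (1-q) * (π (D f) * e i) := by
        calc T * e i * π f = T * (e i * π f) := by rw [mul_assoc]
          _ = T * (π f * e i) := by rw [← (F1 i f).eq]
          _ = (T * π f) * e i := by rw [mul_assoc]
          _ = (π (σ f) * T + algebraMap k H (1-q) * π (D f)) * e i := by rw [hT f]
          _ = π (σ f) * (T * e i) + algebraMap k H (1-q) * (π (D f) * e i) := by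
              rw [add_mul, mul_assoc, mul_assoc]
      calc (T * e i + algebraMap k H (1-q) * ui) * π f
          = T * e i * π f + algebraMap k H (1-q) * (ui * π f) := by
            rw [add_mul, mul_assoc (algebraMap k H (1-q)) ui (π f)]
        _ = π (σ f) * (T * e i)
              + algebraMap k H (1-q) * (π (D f) * e i + ui * π f) := by
            rw [hTe, mul_add, add_assoc]
        _ = π (σ f) * (T * e i) + algebraMap k H (1-q) * (π (σ f) * ui) := by
            rw [Dclaim ui i uimul Fui f]
        _ = π (σ f) * (T * e i + algebraMap k H (1-q) * ui) := by
            rw [mul_add]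
            congr 1
            rw [← mul_assoc, ← mul_assoc, (aux_calg (1-q) (π (σ f))).eq]
    have twineJ : ∀ f, (e j * T + algebraMap k H (1-q) * uj) * π f
        = π (σ f) * (e j * T + algebraMap k H (1-q) * uj) := by
      intro f
      have hTe : e j * T * π f = π (σ f) * (e j * T)
          + algebraMap k H (1-q) * (π (D f) * e j) := by
        calc e j * T * π f = e j * (T * π f) := by rw [mul_assoc]
          _ = e j * (π (σ f) * T + algebraMap k H (1-q) * π (D f)) := by rw [hT f]
          _ = e j * (π (σ f) * T) + e j * (algebraMap k H (1-q) * π (D f)) := by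
              rw [mul_add]
          _ = π (σ f) * (e j * T) + algebraMap k H (1-q) * (π (D f) * e j) := by
              congr 1
              · rw [← mul_assoc, ← (F1 j (σ f)).eq, mul_assoc]
              · rw [← mul_assoc, ← (aux_calg (1-q) (e j)).eq, mul_assoc, ← (F1 j (D f)).eq]
      calc (e j * T + algebraMap k H (1-q) * uj) * π f
          = e j * T * π f + algebraMap k H (1-q) * (uj * π f) := by
            rw [add_mul, mul_assoc (algebraMap k H (1-q)) uj (π f)]
        _ = π (σ f) * (e j * T)
              + algebraMap k H (1-q) * (π (D f) * e j + uj * π f) := by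
            rw [hTe, mul_add, add_assoc]
        _ = π (σ f) * (e j * T) + algebraMap k H (1-q) * (π (σ f) * uj) := by
            rw [Dclaim uj j ujmul Fuj f]
        _ = π (σ f) * (e j * T + algebraMap k H (1-q) * uj) := by
            rw [mul_add]
            congr 1
            rw [← mul_assoc, ← mul_assoc, (aux_calg (1-q) (π (σ f))).eq]
    have Ye : (T * e i + algebraMap k H (1-q) * ui) * e i
        = T * e i + algebraMap k H (1-q) * ui := by
      rw [add_mul, mul_assoc T, hidem i, mul_assoc, uie]
    have Y'e : e j * (e j * T + algebraMap k H (1-q) * uj)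
        = e j * T + algebraMap k H (1-q) * uj := by
      rw [mul_add, ← mul_assoc, hidem j, ← mul_assoc, ← (aux_calg (1-q) (e j)).eq,
        mul_assoc, euj]
    have hjs : ∀ s, j s = i s + (-(a s r) : ℤ) • i r := by
      intro s; rw [hj s, zsmul_eq_mul]; push_cast; ring
    have eY : e j * (T * e i + algebraMap k H (1-q) * ui)
        = T * e i + algebraMap k H (1-q) * ui := by
      rw [hmemL]
      intro s
      obtain ⟨M1, hM1⟩ := specY i s
      refine ⟨M1, ?_⟩
      set p : AddMonoidAlgebra k (Fin n →₀ ℤ) :=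
        laurentMonomial k n (Finsupp.single s 1 + Finsupp.single r (-(a s r)))
          - algebraMap k (AddMonoidAlgebra k (Fin n →₀ ℤ)) (q ^ ((j s).val)) with hp
      have hπp : π p
          = π (laurentMonomial k n (Finsupp.single s 1 + Finsupp.single r (-(a s r))))
            - algebraMap k H (q ^ ((j s).val)) := by
        rw [hp, map_sub, AlgHom.commutes]
      have hπσp : π (σ p) = x s - algebraMap k H (q ^ ((j s).val)) := by
        rw [hp, map_sub, AlgHom.commutes, map_sub, AlgHom.commutes, sigY, hπ]
      have hre : q ^ ((j s).val) = q ^ ((i s + (-(a s r) : ℤ) • i r).val) := by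
        rw [← hjs s]
      have hMval : (π p) ^ M1 * e i = 0 := by
        rw [hπp, hre]
        exact hM1
      calc (x s - algebraMap k H (q ^ ((j s).val))) ^ M1
            * (T * e i + algebraMap k H (1-q) * ui)
          = (π (σ p)) ^ M1 * (T * e i + algebraMap k H (1-q) * ui) := by rw [hπσp]
        _ = π (σ (p ^ M1)) * (T * e i + algebraMap k H (1-q) * ui) := by
            rw [map_pow, map_pow]
        _ = (T * e i + algebraMap k H (1-q) * ui) * π (p ^ M1) :=
            (twineI (p ^ M1)).symm
        _ = (T * e i + algebraMap k H (1-q) * ui) * (π p) ^ M1 := by rw [map_pow]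
        _ = ((T * e i + algebraMap k H (1-q) * ui) * e i) * (π p) ^ M1 := by rw [Ye]
        _ = (T * e i + algebraMap k H (1-q) * ui) * (e i * (π p) ^ M1) := by
            rw [mul_assoc]
        _ = (T * e i + algebraMap k H (1-q) * ui) * ((π p) ^ M1 * e i) := by
            rw [← ((F1 i p).pow_left M1).eq]
        _ = 0 := by rw [hMval, mul_zero]
    have eY' : (e j * T + algebraMap k H (1-q) * uj) * e i
        = e j * T + algebraMap k H (1-q) * uj := by
      rw [hmemR]
      intro s
      obtain ⟨M1, hM1⟩ := specY j s
      refine ⟨M1, ?_⟩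
      set p : AddMonoidAlgebra k (Fin n →₀ ℤ) :=
        laurentMonomial k n (Finsupp.single s 1)
          - algebraMap k (AddMonoidAlgebra k (Fin n →₀ ℤ)) (q ^ ((i s).val)) with hp
      have hπp : π p = x s - algebraMap k H (q ^ ((i s).val)) := by
        rw [hp, map_sub, AlgHom.commutes, hπ]
      have hπσp : π (σ p)
          = π (laurentMonomial k n (Finsupp.single s 1 + Finsupp.single r (-(a s r))))
            - algebraMap k H (q ^ ((i s).val)) := by
        rw [hp, map_sub, AlgHom.commutes, map_sub, AlgHom.commutes, sigX]
      have hjr : j s + (-(a s r) : ℤ) • j r = i s := by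
        rw [hj s, hj r, harr, zsmul_eq_mul]
        push_cast
        ring
      rw [hjr] at hM1
      calc (e j * T + algebraMap k H (1-q) * uj)
            * (x s - algebraMap k H (q ^ ((i s).val))) ^ M1
          = (e j * T + algebraMap k H (1-q) * uj) * (π p) ^ M1 := by rw [hπp]
        _ = (e j * T + algebraMap k H (1-q) * uj) * π (p ^ M1) := by rw [map_pow]
        _ = π (σ (p ^ M1)) * (e j * T + algebraMap k H (1-q) * uj) := twineJ (p ^ M1)
        _ = (π (σ p)) ^ M1 * (e j * T + algebraMap k H (1-q) * uj) := by
            rw [map_pow, map_pow]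
        _ = (π (σ p)) ^ M1 * (e j * (e j * T + algebraMap k H (1-q) * uj)) := by
            rw [Y'e]
        _ = ((π (σ p)) ^ M1 * e j) * (e j * T + algebraMap k H (1-q) * uj) := by
            rw [mul_assoc]
        _ = 0 := by rw [hπσp, hM1, zero_mul]
    have gamma : e j * ui = uj * e i := by
      by_cases hji : j = i
      · subst hji
        have huiuj : ui = uj := by
          calc ui = ui * e j := uie.symm
            _ = ui * ((1 - x r) * e j * uj) := by rw [huj2]
            _ = (ui * ((1 - x r) * e j)) * uj := by simp only [mul_assoc]
            _ = e j * uj := by rw [hui1]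
            _ = uj := euj
        rw [eui, huiuj, uje]
      · have h1 : e j * ui = 0 := by rw [← eui, ← mul_assoc, horth j i hji, zero_mul]
        have h2 : uj * e i = 0 := by rw [← uje, mul_assoc, horth j i hji, mul_zero]
        rw [h1, h2]
    have hfromY : e j * T * e i + algebraMap k H (1-q) * (e j * ui)
        = T * e i + algebraMap k H (1-q) * ui := by
      have h := eY
      rw [mul_add, ← mul_assoc, ← mul_assoc, ← (aux_calg (1-q) (e j)).eq,
        mul_assoc (algebraMap k H (1-q)) (e j) ui] at h
      exact h
    have hfromY' : e j * T * e i + algebraMap k H (1-q) * (uj * e i)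
        = e j * T + algebraMap k H (1-q) * uj := by
      have h := eY'
      rw [add_mul, mul_assoc (algebraMap k H (1-q))] at h
      exact h
    have hkey : T * e i + algebraMap k H (1-q) * ui
        = e j * T + algebraMap k H (1-q) * uj := by
      rw [← hfromY, gamma]
      exact hfromY'
    rw [← hkey]
    abel
end
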